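/- Let (H', ω') and (H'', ω'') be complex symplectic spaces, and let H = H' × H'' with the skew-Hermitian form ω((x', x''), (y', y'')) = ω'(x', y') + ω''(x'', y''). For i = 1, 2, 3, let A_i be a Lagrangian subspace of H' and B_i a Lagrangian subspace of H''. Then each product subspace A_i × B_i is Lagrangian in (H, ω), and the Maslov triple index is additive: τ_H(A_1 × B_1, A_2 × B_2, A_3 × B_3) = τ_{H'}(A_1, A_2, A_3) + τ_{H''}(B_1, B_2, B_3). -/
import Mathlib

open Complex

/-- A nondegenerate skew-Hermitian sesquilinear form (conjugate-linear in the
first variable, linear in the second). -/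
structure IsSymplForm {H : Type*} [AddCommGroup H] [Module ℂ H] (ω : H → H → ℂ) : Prop where
  add_left : ∀ x y z : H, ω (x + y) z = ω x z + ω y z
  smul_left : ∀ (c : ℂ) (x y : H), ω (c • x) y = (starRingEnd ℂ) c * ω x y
  add_right : ∀ x y z : H, ω x (y + z) = ω x y + ω x z
  smul_right : ∀ (c : ℂ) (x y : H), ω x (c • y) = c * ω x y
  skew : ∀ x y : H, ω y x = -((starRingEnd ℂ) (ω x y))
  nondeg : ∀ x : H, (∀ y : H, ω x y = 0) → x = 0

/-- A subspace is Lagrangian if it equals its orthogonal complement. -/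
def IsLagrangian {H : Type*} [AddCommGroup H] [Module ℂ H]
    (ω : H → H → ℂ) (L : Submodule ℂ H) : Prop :=
  (L : Set H) = {x : H | ∀ l ∈ L, ω x l = 0}

/-- A choice of the `L1`-component of a decomposition of `x ∈ L1 ⊔ L2`. -/
noncomputable def firstPart {H : Type*} [AddCommGroup H] [Module ℂ H]
    (L1 L2 : Submodule ℂ H) (x : H) : H :=
  letI := Classical.propDecidable (x ∈ L1 ⊔ L2)
  if hx : x ∈ L1 ⊔ L2 then Classical.choose (Submodule.mem_sup.mp hx) else 0

/-- The Maslov form of a triple of Lagrangians, computed via a choice of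
decompositions: `ψ(a,b) = ω(a₁, b₂)`. -/
noncomputable def maslovForm {H : Type*} [AddCommGroup H] [Module ℂ H]
    (ω : H → H → ℂ) (L1 L2 : Submodule ℂ H) (a b : H) : ℂ :=
  ω (firstPart L1 L2 a) (b - firstPart L1 L2 b)

/-- The maximal dimension of a subspace of `W` on which `ψ` is positive definite. -/
noncomputable def posIndex {H : Type*} [AddCommGroup H] [Module ℂ H]
    (ψ : H → H → ℂ) (W : Submodule ℂ H) : ℕ :=
  sSup {d : ℕ | ∃ S : Submodule ℂ H, S ≤ W ∧ Module.finrank ℂ S = d ∧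
    ∀ x ∈ S, x ≠ 0 → 0 < (ψ x x).re}

/-- The maximal dimension of a subspace of `W` on which `ψ` is negative definite. -/
noncomputable def negIndex {H : Type*} [AddCommGroup H] [Module ℂ H]
    (ψ : H → H → ℂ) (W : Submodule ℂ H) : ℕ :=
  sSup {d : ℕ | ∃ S : Submodule ℂ H, S ≤ W ∧ Module.finrank ℂ S = d ∧
    ∀ x ∈ S, x ≠ 0 → (ψ x x).re < 0}

/-- The Maslov triple index: the signature of the Maslov form of `(L1, L2, L3)`
on `(L1 ⊔ L2) ⊓ L3`. -/
noncomputable def maslovIndex {H : Type*} [AddCommGroup H] [Module ℂ H]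
    (ω : H → H → ℂ) (L1 L2 L3 : Submodule ℂ H) : ℤ :=
  (posIndex (maslovForm ω L1 L2) ((L1 ⊔ L2) ⊓ L3) : ℤ) -
  (negIndex (maslovForm ω L1 L2) ((L1 ⊔ L2) ⊓ L3) : ℤ)

/-! ### Auxiliary: Hermitian forms on subspaces -/

section Herm

variable {H : Type*} [AddCommGroup H] [Module ℂ H]

/-- A form that is sesquilinear and Hermitian when restricted to `W`. -/
structure IsHermOn (ψ : H → H → ℂ) (W : Submodule ℂ H) : Prop where
  addr : ∀ x ∈ W, ∀ y ∈ W, ∀ z ∈ W, ψ x (y + z) = ψ x y + ψ x z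
  smulr : ∀ (c : ℂ), ∀ x ∈ W, ∀ y ∈ W, ψ x (c • y) = c * ψ x y
  herm : ∀ x ∈ W, ∀ y ∈ W, ψ y x = (starRingEnd ℂ) (ψ x y)

namespace IsHermOn

variable {ψ : H → H → ℂ} {W : Submodule ℂ H}

theorem zero_right (h : IsHermOn ψ W) {x : H} (hx : x ∈ W) : ψ x 0 = 0 := by
  have := h.smulr 0 x hx 0 W.zero_mem
  simpa using this

theorem zero_zero (h : IsHermOn ψ W) : ψ 0 0 = 0 := h.zero_right W.zero_mem

theorem subr (h : IsHermOn ψ W) {x : H} (hx : x ∈ W) {y z : H} (hy : y ∈ W) (hz : z ∈ W) :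
    ψ x (y - z) = ψ x y - ψ x z := by
  have h1 := h.addr x hx y hy (-z) (W.neg_mem hz)
  have h2 := h.smulr (-1) x hx z hz
  simp only [neg_smul, one_smul] at h2
  rw [sub_eq_add_neg, h1, h2]
  ring

theorem real_diag (h : IsHermOn ψ W) {x : H} (hx : x ∈ W) : (ψ x x).im = 0 := by
  have := h.herm x hx x hx
  have h2 : (ψ x x).im = -(ψ x x).im := by
    conv_lhs => rw [this]
    simp
  linarith

theorem neg (h : IsHermOn ψ W) : IsHermOn (fun a b => -(ψ a b)) W := by
  constructor
  · intro x hx y hy z hz; simp [h.addr x hx y hy z hz]; ring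
  · intro c x hx y hy; simp [h.smulr c x hx y hy]
  · intro x hx y hy; simp [h.herm x hx y hy]

end IsHermOn

variable [FiniteDimensional ℂ H]

/-- Decomposition of a subspace into a positive-definite part and a
nonpositive part, for a Hermitian form. -/
theorem exists_pos_nonpos (ψ : H → H → ℂ) (W : Submodule ℂ H) (h : IsHermOn ψ W) :
    ∃ P N : Submodule ℂ H, P ≤ W ∧ N ≤ W ∧
      Module.finrank ℂ P + Module.finrank ℂ N = Module.finrank ℂ W ∧
      (∀ x ∈ P, x ≠ 0 → 0 < (ψ x x).re) ∧ (∀ x ∈ N, (ψ x x).re ≤ 0) := by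
  suffices key : ∀ n : ℕ, ∀ W : Submodule ℂ H, IsHermOn ψ W → Module.finrank ℂ W = n →
      ∃ P N : Submodule ℂ H, P ≤ W ∧ N ≤ W ∧
      Module.finrank ℂ P + Module.finrank ℂ N = Module.finrank ℂ W ∧
      (∀ x ∈ P, x ≠ 0 → 0 < (ψ x x).re) ∧ (∀ x ∈ N, (ψ x x).re ≤ 0) by
    exact key _ W h rfl
  intro n
  induction n using Nat.strong_induction_on with
  | _ n ih =>
    intro W h hn
    by_cases hall : ∀ x ∈ W, (ψ x x).re ≤ 0
    · exact ⟨⊥, W, bot_le, le_rfl, by simp, fun x hx => by simp at hx; tauto, hall⟩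
    push_neg at hall
    obtain ⟨x, hxW, hxpos⟩ := hall
    have hpsixx : ψ x x ≠ 0 := fun h0 => by simp [h0] at hxpos
    have hx0 : x ≠ 0 := fun h0 => hpsixx (h0 ▸ h.zero_zero)
    -- the orthogonal complement of x in W
    set W' : Submodule ℂ H :=
      { carrier := {y | y ∈ W ∧ ψ x y = 0}
        add_mem' := fun {a b} ha hb => ⟨W.add_mem ha.1 hb.1,
          by rw [h.addr x hxW a ha.1 b hb.1, ha.2, hb.2, add_zero]⟩
        zero_mem' := ⟨W.zero_mem, h.zero_right hxW⟩
        smul_mem' := fun c {a} ha => ⟨W.smul_mem c ha.1,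
          by rw [h.smulr c x hxW a ha.1, ha.2, mul_zero]⟩ } with hW'def
    have hW'mem : ∀ y, y ∈ W' ↔ y ∈ W ∧ ψ x y = 0 := fun y => Iff.rfl
    have hW'W : W' ≤ W := fun y hy => ((hW'mem y).1 hy).1
    have hxnot : x ∉ W' := fun hx => hpsixx ((hW'mem x).1 hx).2
    have hinf : (ℂ ∙ x) ⊓ W' = ⊥ := by
      rw [eq_bot_iff]
      rintro y ⟨hy1, hy2⟩
      obtain ⟨c, rfl⟩ := Submodule.mem_span_singleton.mp hy1
      have := ((hW'mem _).1 hy2).2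
      rw [h.smulr c x hxW x hxW] at this
      rcases mul_eq_zero.mp this with hc | hc
      · simp [hc]
      · exact absurd hc hpsixx
    have hsup : (ℂ ∙ x) ⊔ W' = W := by
      apply le_antisymm
      · exact sup_le ((Submodule.span_singleton_le_iff_mem x W).mpr hxW) hW'W
      · intro y hy
        have hyx : y - (ψ x y / ψ x x) • x ∈ W' := by
          refine (hW'mem _).2 ⟨W.sub_mem hy (W.smul_mem _ hxW), ?_⟩
          rw [h.subr hxW hy (W.smul_mem _ hxW), h.smulr _ x hxW x hxW,
            div_mul_cancel₀ _ hpsixx, sub_self]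
        have : y = (ψ x y / ψ x x) • x + (y - (ψ x y / ψ x x) • x) := by abel
        rw [this]
        exact Submodule.add_mem _
          (Submodule.mem_sup_left (Submodule.mem_span_singleton.mpr ⟨_, rfl⟩))
          (Submodule.mem_sup_right hyx)
    have hrank : 1 + Module.finrank ℂ W' = Module.finrank ℂ W := by
      have := Submodule.finrank_sup_add_finrank_inf_eq (ℂ ∙ x) W'
      rw [hsup, hinf, finrank_bot, add_zero, finrank_span_singleton hx0] at this
      omega
    have hW'herm : IsHermOn ψ W' :=
      ⟨fun a ha b hb c hc => h.addr a (hW'W ha) b (hW'W hb) c (hW'W hc),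
       fun c a ha b hb => h.smulr c a (hW'W ha) b (hW'W hb),
       fun a ha b hb => h.herm a (hW'W ha) b (hW'W hb)⟩
    have hlt : Module.finrank ℂ W' < n := by omega
    obtain ⟨P', N', hP'W, hN'W, hrank', hP'pos, hN'neg⟩ := ih _ hlt W' hW'herm rfl
    refine ⟨(ℂ ∙ x) ⊔ P', N', ?_, hN'W.trans hW'W, ?_, ?_, hN'neg⟩
    · rw [← hsup]; exact sup_le_sup_left hP'W _
    · have hinf' : (ℂ ∙ x) ⊓ P' = ⊥ := by
        rw [eq_bot_iff, ← hinf]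
        exact inf_le_inf_left _ hP'W
      have := Submodule.finrank_sup_add_finrank_inf_eq (ℂ ∙ x) P'
      rw [hinf', finrank_bot, add_zero, finrank_span_singleton hx0] at this
      omega
    · -- positive definiteness on (ℂ ∙ x) ⊔ P'
      intro z hz hz0
      obtain ⟨u, hu, p, hp, rfl⟩ := Submodule.mem_sup.mp hz
      obtain ⟨c, rfl⟩ := Submodule.mem_span_singleton.mp hu
      have hpW : p ∈ W := hW'W (hP'W hp)
      have hpW' : p ∈ W' := hP'W hp
      have hxp : ψ x p = 0 := ((hW'mem p).1 hpW').2
      have hpx : ψ p x = 0 := by rw [h.herm x hxW p hpW, hxp, map_zero]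
      have hzW : c • x + p ∈ W := W.add_mem (W.smul_mem c hxW) hpW
      have hdiag : ψ (c • x + p) (c • x + p) = c * ((starRingEnd ℂ) c * ψ x x) + ψ p p := by
        rw [h.addr _ hzW _ (W.smul_mem c hxW) _ hpW,
          h.smulr c _ hzW _ hxW]
        have h1 : ψ (c • x + p) x = (starRingEnd ℂ) c * ψ x x := by
          rw [h.herm x hxW _ hzW, h.addr x hxW _ (W.smul_mem c hxW) _ hpW,
            h.smulr c x hxW x hxW, hxp, add_zero, map_mul]
          rw [show (starRingEnd ℂ) (ψ x x) = ψ x x from (h.herm x hxW x hxW).symm]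
        have h2 : ψ (c • x + p) p = ψ p p := by
          rw [h.herm p hpW _ hzW, h.addr p hpW _ (W.smul_mem c hxW) _ hpW,
            h.smulr c p hpW x hxW, hpx, mul_zero, zero_add]
          rw [show (starRingEnd ℂ) (ψ p p) = ψ p p from (h.herm p hpW p hpW).symm]
        rw [h1, h2]
      have hre : (ψ (c • x + p) (c • x + p)).re
          = Complex.normSq c * (ψ x x).re + (ψ p p).re := by
        rw [hdiag]
        have : c * ((starRingEnd ℂ) c * ψ x x) = (Complex.normSq c : ℂ) * ψ x x := by
          rw [← mul_assoc, Complex.mul_conj]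
        rw [this, Complex.add_re, Complex.re_ofReal_mul]
      rw [hre]
      rcases eq_or_ne c 0 with rfl | hc
      · have hp0 : p ≠ 0 := by simpa using hz0
        have := hP'pos p hp hp0
        simp [this]
      · have h1 : 0 < Complex.normSq c * (ψ x x).re :=
          mul_pos (Complex.normSq_pos.mpr hc) hxpos
        have h2 : 0 ≤ (ψ p p).re := by
          rcases eq_or_ne p 0 with rfl | hp0
          · rw [h.zero_zero]; simp
          · exact le_of_lt (hP'pos p hp hp0)
        linarith

/-- `posIndex` is computed by any pos-def/nonpos decomposition. -/
theorem posIndex_eq (ψ : H → H → ℂ) (W P N : Submodule ℂ H)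
    (hPW : P ≤ W) (hNW : N ≤ W)
    (hd : Module.finrank ℂ P + Module.finrank ℂ N = Module.finrank ℂ W)
    (hP : ∀ x ∈ P, x ≠ 0 → 0 < (ψ x x).re) (hN : ∀ x ∈ N, (ψ x x).re ≤ 0) :
    posIndex ψ W = Module.finrank ℂ P := by
  unfold posIndex
  apply le_antisymm
  · refine csSup_le ⟨0, ⊥, bot_le, finrank_bot ℂ H, fun x hx h0 => absurd ?_ h0⟩ ?_
    · simpa using hx
    rintro d ⟨S, hSW, rfl, hS⟩
    have hSN : S ⊓ N = ⊥ := by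
      rw [eq_bot_iff]
      rintro y ⟨hy1, hy2⟩
      by_contra hy0
      have hy0' : y ≠ 0 := fun h0 => hy0 (h0 ▸ Submodule.zero_mem ⊥)
      exact absurd (hS y hy1 hy0') (not_lt.mpr (hN y hy2))
    have heq := Submodule.finrank_sup_add_finrank_inf_eq S N
    rw [hSN, finrank_bot, add_zero] at heq
    have hle : Module.finrank ℂ ↥(S ⊔ N) ≤ Module.finrank ℂ W :=
      Submodule.finrank_mono (sup_le hSW hNW)
    omega
  · apply le_csSup
    · refine ⟨Module.finrank ℂ H, ?_⟩
      rintro d ⟨S, -, rfl, -⟩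
      exact S.finrank_le
    · exact ⟨P, hPW, rfl, hP⟩

theorem negIndex_eq_posIndex_neg (ψ : H → H → ℂ) (W : Submodule ℂ H) :
    negIndex ψ W = posIndex (fun a b => -(ψ a b)) W := by
  unfold negIndex posIndex
  congr 1
  ext d
  simp only [Complex.neg_re, neg_pos]

end Herm

/-! ### Products -/

section Prod

variable {H₁ H₂ : Type*} [AddCommGroup H₁] [Module ℂ H₁] [AddCommGroup H₂] [Module ℂ H₂]

/-- A product of submodules is linearly equivalent to the product of the submodules. -/
def prodSubEquiv (p : Submodule ℂ H₁) (q : Submodule ℂ H₂) :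
    ↥(p.prod q) ≃ₗ[ℂ] (↥p × ↥q) where
  toFun z := (⟨(z : H₁ × H₂).1, z.2.1⟩, ⟨(z : H₁ × H₂).2, z.2.2⟩)
  invFun y := ⟨(y.1.1, y.2.1), ⟨y.1.2, y.2.2⟩⟩
  map_add' _ _ := rfl
  map_smul' _ _ := rfl
  left_inv _ := rfl
  right_inv _ := rfl

theorem finrank_prodSub [FiniteDimensional ℂ H₁] [FiniteDimensional ℂ H₂]
    (p : Submodule ℂ H₁) (q : Submodule ℂ H₂) :
    Module.finrank ℂ (p.prod q) = Module.finrank ℂ p + Module.finrank ℂ q := by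
  rw [LinearEquiv.finrank_eq (prodSubEquiv p q), Module.finrank_prod]

theorem prodSub_sup (p p' : Submodule ℂ H₁) (q q' : Submodule ℂ H₂) :
    (p.prod q) ⊔ (p'.prod q') = (p ⊔ p').prod (q ⊔ q') := by
  apply le_antisymm
  · exact sup_le (Submodule.prod_mono le_sup_left le_sup_left)
      (Submodule.prod_mono le_sup_right le_sup_right)
  · rintro ⟨a, b⟩ ⟨ha, hb⟩
    obtain ⟨a₁, ha₁, a₂, ha₂, rfl⟩ := Submodule.mem_sup.mp ha
    obtain ⟨b₁, hb₁, b₂, hb₂, rfl⟩ := Submodule.mem_sup.mp hb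
    exact Submodule.add_mem_sup (show ((a₁, b₁) : H₁ × H₂) ∈ p.prod q from ⟨ha₁, hb₁⟩)
      (show ((a₂, b₂) : H₁ × H₂) ∈ p'.prod q' from ⟨ha₂, hb₂⟩)

theorem prodSub_inf (p p' : Submodule ℂ H₁) (q q' : Submodule ℂ H₂) :
    (p.prod q) ⊓ (p'.prod q') = (p ⊓ p').prod (q ⊓ q') := by
  ext ⟨a, b⟩
  simp only [Submodule.mem_inf, Submodule.mem_prod]
  tauto

variable [FiniteDimensional ℂ H₁] [FiniteDimensional ℂ H₂]

theorem posIndex_prod (ψ₁ : H₁ → H₁ → ℂ) (ψ₂ : H₂ → H₂ → ℂ) (ψ : H₁ × H₂ → H₁ × H₂ → ℂ)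
    (W₁ : Submodule ℂ H₁) (W₂ : Submodule ℂ H₂)
    (h₁ : IsHermOn ψ₁ W₁) (h₂ : IsHermOn ψ₂ W₂)
    (hsum : ∀ x y : H₁ × H₂, x ∈ W₁.prod W₂ → y ∈ W₁.prod W₂ →
      ψ x y = ψ₁ x.1 y.1 + ψ₂ x.2 y.2) :
    posIndex ψ (W₁.prod W₂) = posIndex ψ₁ W₁ + posIndex ψ₂ W₂ := by
  obtain ⟨P₁, N₁, hP₁W, hN₁W, hr₁, hP₁, hN₁⟩ := exists_pos_nonpos ψ₁ W₁ h₁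
  obtain ⟨P₂, N₂, hP₂W, hN₂W, hr₂, hP₂, hN₂⟩ := exists_pos_nonpos ψ₂ W₂ h₂
  rw [posIndex_eq ψ₁ W₁ P₁ N₁ hP₁W hN₁W hr₁ hP₁ hN₁,
    posIndex_eq ψ₂ W₂ P₂ N₂ hP₂W hN₂W hr₂ hP₂ hN₂]
  have key := posIndex_eq ψ (W₁.prod W₂) (P₁.prod P₂) (N₁.prod N₂)
    (Submodule.prod_mono hP₁W hP₂W) (Submodule.prod_mono hN₁W hN₂W)
    (by rw [finrank_prodSub, finrank_prodSub, finrank_prodSub]; omega)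
    (by
      rintro ⟨a, b⟩ ⟨ha, hb⟩ hz0
      have hmem : ((a, b) : H₁ × H₂) ∈ W₁.prod W₂ := ⟨hP₁W ha, hP₂W hb⟩
      rw [hsum _ _ hmem hmem, Complex.add_re]
      have hane : a ≠ 0 ∨ b ≠ 0 := by
        by_contra hc
        push_neg at hc
        exact hz0 (by simp [Prod.ext_iff, hc.1, hc.2])
      have ha' : 0 ≤ (ψ₁ a a).re := by
        rcases eq_or_ne a 0 with rfl | h0
        · rw [h₁.zero_zero]; simp
        · exact le_of_lt (hP₁ a ha h0)
      have hb' : 0 ≤ (ψ₂ b b).re := by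
        rcases eq_or_ne b 0 with rfl | h0
        · rw [h₂.zero_zero]; simp
        · exact le_of_lt (hP₂ b hb h0)
      rcases hane with h0 | h0
      · have := hP₁ a ha h0; linarith
      · have := hP₂ b hb h0; linarith)
    (by
      rintro ⟨a, b⟩ ⟨ha, hb⟩
      have hmem : ((a, b) : H₁ × H₂) ∈ W₁.prod W₂ := ⟨hN₁W ha, hN₂W hb⟩
      rw [hsum _ _ hmem hmem, Complex.add_re]
      have := hN₁ a ha
      have := hN₂ b hb
      linarith)
  rw [key, finrank_prodSub]

theorem negIndex_prod (ψ₁ : H₁ → H₁ → ℂ) (ψ₂ : H₂ → H₂ → ℂ) (ψ : H₁ × H₂ → H₁ × H₂ → ℂ)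
    (W₁ : Submodule ℂ H₁) (W₂ : Submodule ℂ H₂)
    (h₁ : IsHermOn ψ₁ W₁) (h₂ : IsHermOn ψ₂ W₂)
    (hsum : ∀ x y : H₁ × H₂, x ∈ W₁.prod W₂ → y ∈ W₁.prod W₂ →
      ψ x y = ψ₁ x.1 y.1 + ψ₂ x.2 y.2) :
    negIndex ψ (W₁.prod W₂) = negIndex ψ₁ W₁ + negIndex ψ₂ W₂ := by
  rw [negIndex_eq_posIndex_neg, negIndex_eq_posIndex_neg, negIndex_eq_posIndex_neg]
  exact posIndex_prod _ _ _ W₁ W₂ h₁.neg h₂.neg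
    (fun x y hx hy => by rw [hsum x y hx hy]; ring)

end Prod

/-! ### The Maslov form -/

section Maslov

variable {H : Type*} [AddCommGroup H] [Module ℂ H] {ω : H → H → ℂ}

theorem IsSymplForm.zero_right (hω : IsSymplForm ω) (x : H) : ω x 0 = 0 := by
  have := hω.smul_right 0 x 0
  simpa using this

theorem IsSymplForm.zero_left (hω : IsSymplForm ω) (x : H) : ω 0 x = 0 := by
  have := hω.smul_left 0 0 x
  simpa using this

theorem IsSymplForm.sub_right (hω : IsSymplForm ω) (x y z : H) :
    ω x (y - z) = ω x y - ω x z := by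
  have h1 := hω.add_right x y (-z)
  have h2 := hω.smul_right (-1) x z
  simp only [neg_smul, one_smul] at h2
  rw [sub_eq_add_neg, h1, h2]; ring

theorem lagr_ortho {L : Submodule ℂ H} (hL : IsLagrangian ω L) :
    ∀ x ∈ L, ∀ y ∈ L, ω x y = 0 := by
  intro x hx y hy
  have hx' : x ∈ (L : Set H) := hx
  rw [hL] at hx'
  exact hx' y hy

theorem lagr_mem {L : Submodule ℂ H} (hL : IsLagrangian ω L) {x : H}
    (hx : ∀ l ∈ L, ω x l = 0) : x ∈ L := by
  have : x ∈ (L : Set H) := by rw [hL]; exact hx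
  exact this

theorem firstPart_spec {L1 L2 : Submodule ℂ H} {x : H} (hx : x ∈ L1 ⊔ L2) :
    firstPart L1 L2 x ∈ L1 ∧ x - firstPart L1 L2 x ∈ L2 := by
  rw [firstPart]
  rw [dif_pos hx]
  obtain ⟨hy, z, hz, hzx⟩ := Classical.choose_spec (Submodule.mem_sup.mp hx)
  refine ⟨hy, ?_⟩
  rw [sub_eq_of_eq_add (hzx.symm.trans (add_comm _ _))]
  exact hz

/-- The Maslov form is independent of the choice of decomposition. -/
theorem maslovForm_wd (hω : IsSymplForm ω) {L1 L2 : Submodule ℂ H}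
    (hL1 : IsLagrangian ω L1) (hL2 : IsLagrangian ω L2)
    {a b a₁ b₁ : H} (ha : a ∈ L1 ⊔ L2) (hb : b ∈ L1 ⊔ L2)
    (ha₁ : a₁ ∈ L1) (ha₂ : a - a₁ ∈ L2) (hb₁ : b₁ ∈ L1) (hb₂ : b - b₁ ∈ L2) :
    maslovForm ω L1 L2 a b = ω a₁ (b - b₁) := by
  obtain ⟨hu1, hu2⟩ := firstPart_spec ha
  obtain ⟨hv1, hv2⟩ := firstPart_spec hb
  set u := firstPart L1 L2 a
  set v := firstPart L1 L2 b
  have hd1 : a₁ - u ∈ L1 := L1.sub_mem ha₁ hu1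
  have hd2 : a₁ - u ∈ L2 := by
    have : a₁ - u = (a - u) - (a - a₁) := by abel
    rw [this]; exact L2.sub_mem hu2 ha₂
  have he1 : b₁ - v ∈ L1 := L1.sub_mem hb₁ hv1
  have he2 : b₁ - v ∈ L2 := by
    have : b₁ - v = (b - v) - (b - b₁) := by abel
    rw [this]; exact L2.sub_mem hv2 hb₂
  have key : ω a₁ (b - b₁) = ω (u + (a₁ - u)) ((b - v) - (b₁ - v)) := by
    congr 1 <;> abel
  have expand : ω (u + (a₁ - u)) ((b - v) - (b₁ - v))
      = (ω u (b - v) - ω u (b₁ - v)) + (ω (a₁ - u) (b - v) - ω (a₁ - u) (b₁ - v)) := by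
    rw [hω.add_left u (a₁ - u) ((b - v) - (b₁ - v)),
      hω.sub_right u (b - v) (b₁ - v), hω.sub_right (a₁ - u) (b - v) (b₁ - v)]
  rw [key, expand, lagr_ortho hL1 u hu1 _ he1, lagr_ortho hL2 _ hd2 _ hv2,
    lagr_ortho hL2 _ hd2 _ he2]
  have : maslovForm ω L1 L2 a b = ω u (b - v) := rfl
  rw [this]; ring

/-- The Maslov form is Hermitian sesquilinear on `(L1 ⊔ L2) ⊓ L3`. -/
theorem maslovForm_hermOn (hω : IsSymplForm ω) {L1 L2 L3 : Submodule ℂ H}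
    (hL1 : IsLagrangian ω L1) (hL2 : IsLagrangian ω L2) (hL3 : IsLagrangian ω L3) :
    IsHermOn (maslovForm ω L1 L2) ((L1 ⊔ L2) ⊓ L3) := by
  constructor
  · rintro x ⟨hx, -⟩ y ⟨hy, -⟩ z ⟨hz, -⟩
    obtain ⟨hu1, hu2⟩ := firstPart_spec hx
    obtain ⟨hv1, hv2⟩ := firstPart_spec hy
    obtain ⟨hw1, hw2⟩ := firstPart_spec hz
    set u := firstPart L1 L2 x
    set v := firstPart L1 L2 y
    set w := firstPart L1 L2 z
    have h1 : maslovForm ω L1 L2 x (y + z) = ω u ((y + z) - (v + w)) := by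
      refine maslovForm_wd hω hL1 hL2 hx (Submodule.add_mem _ hy hz) hu1 hu2
        (L1.add_mem hv1 hw1) ?_
      have : (y + z) - (v + w) = (y - v) + (z - w) := by abel
      rw [this]; exact L2.add_mem hv2 hw2
    rw [h1]
    have : (y + z) - (v + w) = (y - v) + (z - w) := by abel
    rw [this, hω.add_right]
    have e1 : maslovForm ω L1 L2 x y = ω u (y - v) := rfl
    have e2 : maslovForm ω L1 L2 x z = ω u (z - w) := rfl
    rw [e1, e2]
  · rintro c x ⟨hx, -⟩ y ⟨hy, -⟩
    obtain ⟨hu1, hu2⟩ := firstPart_spec hx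
    obtain ⟨hv1, hv2⟩ := firstPart_spec hy
    set u := firstPart L1 L2 x
    set v := firstPart L1 L2 y
    have h1 : maslovForm ω L1 L2 x (c • y) = ω u (c • y - c • v) := by
      refine maslovForm_wd hω hL1 hL2 hx (Submodule.smul_mem _ c hy) hu1 hu2
        (L1.smul_mem c hv1) ?_
      rw [← smul_sub]; exact L2.smul_mem c hv2
    rw [h1, ← smul_sub, hω.smul_right]
    have e1 : maslovForm ω L1 L2 x y = ω u (y - v) := rfl
    rw [e1]
  · rintro x ⟨hx, hx3⟩ y ⟨hy, hy3⟩
    obtain ⟨hu1, hu2⟩ := firstPart_spec hx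
    obtain ⟨hv1, hv2⟩ := firstPart_spec hy
    set u := firstPart L1 L2 x
    set v := firstPart L1 L2 y
    have hxy : ω x y = 0 := lagr_ortho hL3 x hx3 y hy3
    have hexp : ω x y = ω u y + ω (x - u) y := by
      rw [← hω.add_left]; congr 1; abel
    have hexp2 : ω u y = ω u v + ω u (y - v) := by
      rw [← hω.add_right]; congr 1; abel
    have hexp3 : ω (x - u) y = ω (x - u) v + ω (x - u) (y - v) := by
      rw [← hω.add_right]; congr 1; abel
    have huv : ω u v = 0 := lagr_ortho hL1 u hu1 v hv1
    have hxy2 : ω (x - u) (y - v) = 0 := lagr_ortho hL2 _ hu2 _ hv2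
    have hkey : ω (x - u) v = -(ω u (y - v)) := by
      rw [hexp, hexp2, hexp3, huv, hxy2] at hxy
      linear_combination hxy
    have e1 : maslovForm ω L1 L2 y x = ω v (x - u) := rfl
    have e2 : maslovForm ω L1 L2 x y = ω u (y - v) := rfl
    rw [e1, e2, hω.skew (x - u) v, hkey, map_neg, neg_neg]

end Maslov

/-! ### Products of Lagrangians -/

section MaslovProd

variable {H₁ H₂ : Type*} [AddCommGroup H₁] [Module ℂ H₁] [AddCommGroup H₂] [Module ℂ H₂]
  {ω₁ : H₁ → H₁ → ℂ} {ω₂ : H₂ → H₂ → ℂ} {ω : H₁ × H₂ → H₁ × H₂ → ℂ}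

theorem prod_lagrangian (hω₁ : IsSymplForm ω₁) (hω₂ : IsSymplForm ω₂)
    (hω : ∀ x y : H₁ × H₂, ω x y = ω₁ x.1 y.1 + ω₂ x.2 y.2)
    {A : Submodule ℂ H₁} {B : Submodule ℂ H₂}
    (hA : IsLagrangian ω₁ A) (hB : IsLagrangian ω₂ B) :
    IsLagrangian ω (A.prod B) := by
  unfold IsLagrangian
  ext x
  simp only [Set.mem_setOf_eq, SetLike.mem_coe, Submodule.mem_prod]
  constructor
  · rintro ⟨h1, h2⟩ l hl
    rw [hω, lagr_ortho hA x.1 h1 l.1 hl.1, lagr_ortho hB x.2 h2 l.2 hl.2, add_zero]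
  · intro hx
    constructor
    · refine lagr_mem hA fun l hl => ?_
      have := hx (l, 0) ⟨hl, B.zero_mem⟩
      rw [hω] at this
      simpa [hω₂.zero_right] using this
    · refine lagr_mem hB fun l hl => ?_
      have := hx (0, l) ⟨A.zero_mem, hl⟩
      rw [hω] at this
      simpa [hω₁.zero_right] using this

theorem maslovForm_prod (hω₁ : IsSymplForm ω₁) (hω₂ : IsSymplForm ω₂)
    (hω : ∀ x y : H₁ × H₂, ω x y = ω₁ x.1 y.1 + ω₂ x.2 y.2)
    {A1 A2 : Submodule ℂ H₁} {B1 B2 : Submodule ℂ H₂}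
    (hA1 : IsLagrangian ω₁ A1) (hA2 : IsLagrangian ω₁ A2)
    (hB1 : IsLagrangian ω₂ B1) (hB2 : IsLagrangian ω₂ B2)
    {x y : H₁ × H₂}
    (hx : x ∈ (A1.prod B1) ⊔ (A2.prod B2)) (hy : y ∈ (A1.prod B1) ⊔ (A2.prod B2)) :
    maslovForm ω (A1.prod B1) (A2.prod B2) x y =
      maslovForm ω₁ A1 A2 x.1 y.1 + maslovForm ω₂ B1 B2 x.2 y.2 := by
  obtain ⟨hu, hu2⟩ := firstPart_spec hx
  obtain ⟨hv, hv2⟩ := firstPart_spec hy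
  set u := firstPart (A1.prod B1) (A2.prod B2) x
  set v := firstPart (A1.prod B1) (A2.prod B2) y
  rw [Submodule.mem_prod] at hu hv hu2 hv2
  have hx1 : x.1 ∈ A1 ⊔ A2 := by
    rw [prodSub_sup, Submodule.mem_prod] at hx; exact hx.1
  have hy1 : y.1 ∈ A1 ⊔ A2 := by
    rw [prodSub_sup, Submodule.mem_prod] at hy; exact hy.1
  have hx2 : x.2 ∈ B1 ⊔ B2 := by
    rw [prodSub_sup, Submodule.mem_prod] at hx; exact hx.2
  have hy2' : y.2 ∈ B1 ⊔ B2 := by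
    rw [prodSub_sup, Submodule.mem_prod] at hy; exact hy.2
  have e1 : maslovForm ω₁ A1 A2 x.1 y.1 = ω₁ u.1 (y.1 - v.1) :=
    maslovForm_wd hω₁ hA1 hA2 hx1 hy1 hu.1 hu2.1 hv.1 hv2.1
  have e2 : maslovForm ω₂ B1 B2 x.2 y.2 = ω₂ u.2 (y.2 - v.2) :=
    maslovForm_wd hω₂ hB1 hB2 hx2 hy2' hu.2 hu2.2 hv.2 hv2.2
  have e0 : maslovForm ω (A1.prod B1) (A2.prod B2) x y = ω u (y - v) := rfl
  rw [e0, e1, e2, hω]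
  rfl

end MaslovProd

/-- Products of Lagrangians are Lagrangian, and the Maslov triple index is
additive with respect to products of complex symplectic spaces. -/
theorem maslovIndex_prod {H₁ H₂ : Type*}
    [AddCommGroup H₁] [Module ℂ H₁] [FiniteDimensional ℂ H₁]
    [AddCommGroup H₂] [Module ℂ H₂] [FiniteDimensional ℂ H₂]
    (ω₁ : H₁ → H₁ → ℂ) (ω₂ : H₂ → H₂ → ℂ)
    (hω₁ : IsSymplForm ω₁) (hω₂ : IsSymplForm ω₂)
    (ω : H₁ × H₂ → H₁ × H₂ → ℂ)
    (hω : ∀ x y : H₁ × H₂, ω x y = ω₁ x.1 y.1 + ω₂ x.2 y.2)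
    (A : Fin 3 → Submodule ℂ H₁) (B : Fin 3 → Submodule ℂ H₂)
    (hA : ∀ i, IsLagrangian ω₁ (A i)) (hB : ∀ i, IsLagrangian ω₂ (B i)) :
    (∀ i, IsLagrangian ω ((A i).prod (B i))) ∧
      maslovIndex ω ((A 0).prod (B 0)) ((A 1).prod (B 1)) ((A 2).prod (B 2)) =
        maslovIndex ω₁ (A 0) (A 1) (A 2) + maslovIndex ω₂ (B 0) (B 1) (B 2) := by
  refine ⟨fun i => prod_lagrangian hω₁ hω₂ hω (hA i) (hB i), ?_⟩
  set W₁ : Submodule ℂ H₁ := (A 0 ⊔ A 1) ⊓ A 2 with hW₁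
  set W₂ : Submodule ℂ H₂ := (B 0 ⊔ B 1) ⊓ B 2 with hW₂
  have hWeq : ((A 0).prod (B 0) ⊔ (A 1).prod (B 1)) ⊓ (A 2).prod (B 2) = W₁.prod W₂ := by
    rw [prodSub_sup, prodSub_inf]
  have hsum : ∀ x y : H₁ × H₂, x ∈ W₁.prod W₂ → y ∈ W₁.prod W₂ →
      maslovForm ω ((A 0).prod (B 0)) ((A 1).prod (B 1)) x y =
        maslovForm ω₁ (A 0) (A 1) x.1 y.1 + maslovForm ω₂ (B 0) (B 1) x.2 y.2 := by
    intro x y hx hy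
    rw [Submodule.mem_prod] at hx hy
    refine maslovForm_prod hω₁ hω₂ hω (hA 0) (hA 1) (hB 0) (hB 1) ?_ ?_
    · rw [prodSub_sup, Submodule.mem_prod]
      exact ⟨hx.1.1, hx.2.1⟩
    · rw [prodSub_sup, Submodule.mem_prod]
      exact ⟨hy.1.1, hy.2.1⟩
  have hherm₁ : IsHermOn (maslovForm ω₁ (A 0) (A 1)) W₁ :=
    maslovForm_hermOn hω₁ (hA 0) (hA 1) (hA 2)
  have hherm₂ : IsHermOn (maslovForm ω₂ (B 0) (B 1)) W₂ :=
    maslovForm_hermOn hω₂ (hB 0) (hB 1) (hB 2)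
  unfold maslovIndex
  rw [hWeq,
    posIndex_prod _ _ _ W₁ W₂ hherm₁ hherm₂ hsum,
    negIndex_prod _ _ _ W₁ W₂ hherm₁ hherm₂ hsum]
  push_cast
  ring
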